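/- arXiv:2405.06169 — 4 statements merged into one kernel-verified Lean document; each statement's English description precedes it below -/
import Mathlib

section
/- If a group G acts faithfully on a linearly ordered set X by order-preserving bijections, then G is left-orderable. -/
def LeftOrderable (G : Type*) [Group G] : Prop :=
  ∃ r : G → G → Prop, IsStrictTotalOrder G r ∧ ∀ a b c : G, r a b → r (c * a) (c * b)

theorem faithful_order_preserving_action_leftOrderable
    {G X : Type*} [Group G] [LinearOrder X] [MulAction G X]
    (hord : ∀ (g : G) (x y : X), x < y → g • x < g • y)
    (hfaith : ∀ g : G, (∀ x : X, g • x = x) → g = 1) :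
    LeftOrderable G := by
  classical
  let w : X → X → Prop := WellOrderingRel
  have hwf : WellFounded w := (WellOrderingRel.isWellOrder (α := X)).wf
  have htri : ∀ a b : X, w a b ∨ a = b ∨ w b a := fun a b => trichotomous a b
  refine ⟨fun g h => ∃ x : X, g • x < h • x ∧ ∀ y : X, w y x → g • y = h • y,
    { trichotomous := ?_, irrefl := ?_, trans := ?_ }, ?_⟩
  · -- trichotomous
    intro g h hn1 hn2
    by_cases hgh : g = h
    · exact hgh
    · have hne : ∃ x : X, g • x ≠ h • x := by
        by_contra hc
        push_neg at hc
        apply hgh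
        have : g * h⁻¹ = 1 := by
          apply hfaith
          intro x
          rw [mul_smul, hc, smul_inv_smul]
        calc g = g * h⁻¹ * h := by group
          _ = h := by rw [this, one_mul]
      set S : Set X := {x | g • x ≠ h • x} with hS
      have hSne : S.Nonempty := hne
      set x := hwf.min S hSne with hxdef
      have hx : g • x ≠ h • x := hwf.min_mem S hSne
      have hmin : ∀ y, g • y ≠ h • y → ¬ w y x := fun y hy => hwf.not_lt_min S hy
      have hmin' : ∀ y : X, w y x → g • y = h • y := by
        intro y hy
        by_contra hne'
        exact hmin y hne' hy
      rcases lt_trichotomy (g • x) (h • x) with h1 | h1 | h1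
      · exact absurd ⟨x, h1, hmin'⟩ hn1
      · exact absurd h1 hx
      · exact absurd ⟨x, h1, fun y hy => (hmin' y hy).symm⟩ hn2
  · -- irrefl
    rintro g ⟨x, hx, -⟩
    exact lt_irrefl _ hx
  · -- trans
    rintro g h k ⟨x, hx, hxe⟩ ⟨x', hx', hxe'⟩
    rcases htri x x' with h1 | h1 | h1
    · refine ⟨x, ?_, fun y hy => (hxe y hy).trans (hxe' y (Trans.trans hy h1))⟩
      rw [← hxe' x h1]; exact hx
    · subst h1
      exact ⟨x, hx.trans hx', fun y hy => (hxe y hy).trans (hxe' y hy)⟩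
    · refine ⟨x', ?_, fun y hy => (hxe y (Trans.trans hy h1)).trans (hxe' y hy)⟩
      rw [hxe x' h1]; exact hx'
  · -- left invariance
    rintro g h c ⟨x, hx, hxe⟩
    refine ⟨x, ?_, fun y hy => ?_⟩
    · rw [mul_smul, mul_smul]; exact hord c _ _ hx
    · rw [mul_smul, mul_smul, hxe y hy]
end

section
/- If a group G acts faithfully on the real line by orientation-preserving homeomorphisms, then G is left-orderable. -/
theorem faithful_action_on_real_line_leftOrderable {G : Type*} [Group G] [MulAction G ℝ]
    (hmono : ∀ g : G, StrictMono (fun x : ℝ => g • x))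
    (hfaith : ∀ g : G, (∀ x : ℝ, g • x = x) → g = 1) :
    LeftOrderable G := by
  classical
  set W : ℝ → ℝ → Prop := WellOrderingRel with hW
  have hwo : IsWellOrder ℝ W := WellOrderingRel.isWellOrder
  -- the order relation
  refine ⟨fun g h => ∃ x : ℝ, g • x < h • x ∧ ∀ y : ℝ, W y x → g • y = h • y, ?_, ?_⟩
  · refine { trichotomous := ?_, irrefl := ?_, trans := ?_ }
    · -- trichotomy
      intro g h
      by_cases hgh : g = h
      · exact fun _ _ => hgh
      · have hne : ∃ x : ℝ, g • x ≠ h • x := by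
          by_contra hc
          push_neg at hc
          apply hgh
          have : h⁻¹ * g = 1 := by
            apply hfaith
            intro x
            rw [mul_smul, hc x, inv_smul_smul]
          have := congrArg (h * ·) this
          simpa [mul_assoc] using this
        set S : Set ℝ := {x | g • x ≠ h • x} with hS
        have hSne : S.Nonempty := hne
        set m := hwo.wf.min S hSne with hm
        have hmem : m ∈ S := hwo.wf.min_mem S hSne
        have hmin : ∀ y : ℝ, W y m → g • y = h • y := by
          intro y hy
          by_contra hy'
          exact hwo.wf.not_lt_min S hy' hy
        rcases lt_or_gt_of_ne (show g • m ≠ h • m from hmem) with hlt | hgt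
        · exact fun h1 _ => absurd ⟨m, hlt, hmin⟩ h1
        · exact fun _ h2 => absurd ⟨m, hgt, fun y hy => (hmin y hy).symm⟩ h2
    · -- irrefl
      intro g ⟨x, hx, _⟩
      exact lt_irrefl _ hx
    · -- trans
      rintro g h k ⟨a, ha, hamin⟩ ⟨b, hb, hbmin⟩

      rcases trichotomous (r := W) a b with hab | hab | hab
      · refine ⟨a, ?_, ?_⟩
        · have : h • a = k • a := hbmin a hab
          linarith
        · intro y hy
          rw [hamin y hy, hbmin y (trans_of W hy hab)]
      · subst hab
        refine ⟨a, by linarith, fun y hy => by rw [hamin y hy, hbmin y hy]⟩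
      · refine ⟨b, ?_, ?_⟩
        · have : g • b = h • b := hamin b hab
          linarith
        · intro y hy
          rw [hamin y (trans_of W hy hab), hbmin y hy]
  · -- left invariance
    rintro g h c ⟨x, hx, hxmin⟩
    refine ⟨x, ?_, ?_⟩
    · rw [mul_smul, mul_smul]
      exact hmono c hx
    · intro y hy
      rw [mul_smul, mul_smul, hxmin y hy]
end

section
/- Every countable left-orderable group embeds into the group of orientation-preserving homeomorphisms of the real line. That is, if G is a countable group with a left-invariant linear order, then there is an injective group homomorphism from G to the group of strictly increasing homeomorphisms of ℝ. -/
namespace LOEmbedAux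

/-- The set used to extend an order automorphism of `ℚ` to `ℝ`. -/
def extSet (f : ℚ ≃o ℚ) (x : ℝ) : Set ℝ :=
  (fun q : ℚ => ((f q : ℚ) : ℝ)) '' {q : ℚ | (q : ℝ) < x}

lemma extSet_nonempty (f : ℚ ≃o ℚ) (x : ℝ) : (extSet f x).Nonempty := by
  obtain ⟨q, hq⟩ := exists_rat_lt x
  exact ⟨(f q : ℝ), ⟨q, hq, rfl⟩⟩

lemma extSet_bddAbove (f : ℚ ≃o ℚ) (x : ℝ) : BddAbove (extSet f x) := by
  obtain ⟨p, hp⟩ := exists_rat_gt x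
  refine ⟨(f p : ℝ), ?_⟩
  rintro y ⟨q, hq, rfl⟩
  have hqp : q < p := by exact_mod_cast hq.trans hp
  show ((f q : ℚ) : ℝ) ≤ ((f p : ℚ) : ℝ)
  exact_mod_cast (f.lt_iff_lt.mpr hqp).le

/-- Extension of an order automorphism of `ℚ` to `ℝ`. -/
noncomputable def ext (f : ℚ ≃o ℚ) (x : ℝ) : ℝ := sSup (extSet f x)

lemma mem_extSet_le (f : ℚ ≃o ℚ) {x : ℝ} {q : ℚ} (h : (q : ℝ) < x) :
    (f q : ℝ) ≤ ext f x :=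
  le_csSup (extSet_bddAbove f x) ⟨q, h, rfl⟩

lemma ext_le (f : ℚ ≃o ℚ) {x : ℝ} {p : ℚ} (h : x ≤ (p : ℝ)) :
    ext f x ≤ (f p : ℝ) := by
  refine csSup_le (extSet_nonempty f x) ?_
  rintro y ⟨q, hq, rfl⟩
  have hqp : q < p := by exact_mod_cast hq.trans_le h
  show ((f q : ℚ) : ℝ) ≤ ((f p : ℚ) : ℝ)
  exact_mod_cast (f.lt_iff_lt.mpr hqp).le

lemma ext_rat (f : ℚ ≃o ℚ) (q : ℚ) : ext f (q : ℝ) = (f q : ℝ) := by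
  refine csSup_eq_of_forall_le_of_forall_lt_exists_gt (extSet_nonempty f _) ?_ ?_
  · rintro y ⟨p, hp, rfl⟩
    have hpq : p < q := by exact_mod_cast hp
    show ((f p : ℚ) : ℝ) ≤ ((f q : ℚ) : ℝ)
    exact_mod_cast (f.lt_iff_lt.mpr hpq).le
  · intro w hw
    obtain ⟨s, hws, hsf⟩ := exists_rat_btwn hw
    have hsf' : s < f q := by exact_mod_cast hsf
    have h1 : f.symm s < q := by
      have := f.symm.lt_iff_lt.mpr hsf'
      simpa using this
    refine ⟨(f (f.symm s) : ℝ), ⟨f.symm s, by exact_mod_cast h1, rfl⟩, ?_⟩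
    simpa using hws

lemma ext_refl (x : ℝ) : ext (OrderIso.refl ℚ) x = x := by
  refine csSup_eq_of_forall_le_of_forall_lt_exists_gt (extSet_nonempty _ _) ?_ ?_
  · rintro y ⟨q, hq, rfl⟩
    exact hq.le
  · intro w hw
    obtain ⟨s, hws, hsx⟩ := exists_rat_btwn hw
    exact ⟨(s : ℝ), ⟨s, hsx, rfl⟩, hws⟩

lemma ext_strictMono (f : ℚ ≃o ℚ) : StrictMono (ext f) := by
  intro x y hxy
  obtain ⟨q2, hq2x, hq2y⟩ := exists_rat_btwn hxy
  obtain ⟨q1, hq1x, hq1q2⟩ := exists_rat_btwn hq2x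
  have h12 : q1 < q2 := by exact_mod_cast hq1q2
  calc ext f x ≤ (f q1 : ℝ) := ext_le f hq1x.le
    _ < (f q2 : ℝ) := by exact_mod_cast f.lt_iff_lt.mpr h12
    _ ≤ ext f y := mem_extSet_le f hq2y

lemma ext_comp (f g : ℚ ≃o ℚ) (x : ℝ) : ext f (ext g x) = ext (g.trans f) x := by
  refine csSup_eq_csSup_of_forall_exists_le ?_ ?_
  · rintro y ⟨p, hp, rfl⟩
    obtain ⟨z, ⟨q, hq, rfl⟩, hpz⟩ :=
      exists_lt_of_lt_csSup (extSet_nonempty g x) hp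
    have hpq : p < g q := by
      have : (p : ℝ) < ((g q : ℚ) : ℝ) := hpz
      exact_mod_cast this
    refine ⟨(f (g q) : ℝ), ⟨q, hq, rfl⟩, ?_⟩
    show ((f p : ℚ) : ℝ) ≤ ((f (g q) : ℚ) : ℝ)
    exact_mod_cast (f.lt_iff_lt.mpr hpq).le
  · rintro y ⟨q, hq, rfl⟩
    obtain ⟨p, hqp, hpx⟩ := exists_rat_btwn (show (q : ℝ) < x from hq)
    have h1 : g q < g p := g.lt_iff_lt.mpr (by exact_mod_cast hqp)
    have h2 : (g q : ℝ) < ext g x :=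
      lt_of_lt_of_le (by exact_mod_cast h1) (mem_extSet_le g hpx)
    exact ⟨(f (g q) : ℝ), ⟨g q, h2, rfl⟩, le_refl _⟩

/-- The permutation of `ℝ` obtained from an order automorphism of `ℚ`. -/
noncomputable def extPerm (f : ℚ ≃o ℚ) : Equiv.Perm ℝ where
  toFun := ext f
  invFun := ext f.symm
  left_inv x := by
    rw [ext_comp, OrderIso.self_trans_symm, ext_refl]
  right_inv x := by
    rw [ext_comp, OrderIso.symm_trans_self, ext_refl]

end LOEmbedAux

theorem countable_leftOrderable_embeds_in_homeoPlus_real {G : Type*} [Group G] [Countable G]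
    (r : G → G → Prop) (hr : IsStrictTotalOrder G r)
    (hinv : ∀ a b c : G, r a b → r (c * a) (c * b)) :
    ∃ φ : G →* Equiv.Perm ℝ, Function.Injective φ ∧ ∀ g : G, StrictMono (φ g) := by
  classical
  haveI := hr
  letI : LinearOrder G := linearOrderOfSTO r
  have hlt : ∀ a b : G, a < b ↔ r a b := fun a b => Iff.rfl
  -- lex product G ×ₗ ℚ is a countable dense linear order without endpoints
  haveI : Nonempty (G ×ₗ ℚ) := ⟨toLex (1, 0)⟩
  haveI : DenselyOrdered (G ×ₗ ℚ) := by
    constructor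
    intro a b hab
    rcases Prod.Lex.lt_iff.mp hab with h | ⟨h1, h2⟩
    · exact ⟨toLex ((ofLex a).1, (ofLex a).2 + 1),
        Prod.Lex.lt_iff.mpr (Or.inr ⟨rfl, lt_add_one _⟩),
        Prod.Lex.lt_iff.mpr (Or.inl h)⟩
    · obtain ⟨q, hq1, hq2⟩ := exists_between h2
      exact ⟨toLex ((ofLex a).1, q),
        Prod.Lex.lt_iff.mpr (Or.inr ⟨rfl, hq1⟩),
        Prod.Lex.lt_iff.mpr (Or.inr ⟨h1, hq2⟩)⟩
  haveI : NoMinOrder (G ×ₗ ℚ) := by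
    constructor
    intro a
    exact ⟨toLex ((ofLex a).1, (ofLex a).2 - 1),
      Prod.Lex.lt_iff.mpr (Or.inr ⟨rfl, by exact sub_lt_self _ one_pos⟩)⟩
  haveI : NoMaxOrder (G ×ₗ ℚ) := by
    constructor
    intro a
    exact ⟨toLex ((ofLex a).1, (ofLex a).2 + 1),
      Prod.Lex.lt_iff.mpr (Or.inr ⟨rfl, lt_add_one _⟩)⟩
  haveI : Countable (G ×ₗ ℚ) := by
    have : Countable (G × ℚ) := inferInstance
    exact this
  obtain ⟨e⟩ : Nonempty ((G ×ₗ ℚ) ≃o ℚ) := Order.iso_of_countable_dense _ _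
  -- the left translation action on G ×ₗ ℚ
  have actMono : ∀ g : G, ∀ a b : G ×ₗ ℚ, a < b →
      toLex (g * (ofLex a).1, (ofLex a).2) < toLex (g * (ofLex b).1, (ofLex b).2) := by
    intro g a b hab
    rcases Prod.Lex.lt_iff.mp hab with h | ⟨h1, h2⟩
    · exact Prod.Lex.lt_iff.mpr (Or.inl ((hlt _ _).mpr (hinv _ _ g ((hlt _ _).mp h))))
    · exact Prod.Lex.lt_iff.mpr (Or.inr ⟨by rw [h1]; rfl, h2⟩)
  let act : G → (G ×ₗ ℚ) ≃o (G ×ₗ ℚ) := fun g =>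
    StrictMono.orderIsoOfSurjective
      (fun a => toLex (g * (ofLex a).1, (ofLex a).2))
      (fun a b hab => actMono g a b hab)
      (fun a => ⟨toLex (g⁻¹ * (ofLex a).1, (ofLex a).2), by
        simp [mul_assoc]⟩)
  have act_apply : ∀ g : G, ∀ a : G ×ₗ ℚ,
      act g a = toLex (g * (ofLex a).1, (ofLex a).2) := fun g a => rfl
  -- conjugate to order automorphisms of ℚ
  let ψ : G → ℚ ≃o ℚ := fun g => (e.symm.trans (act g)).trans e
  have ψ_apply : ∀ g q, ψ g q = e (act g (e.symm q)) := fun g q => rfl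
  have ψ_mul : ∀ g h : G, ψ (g * h) = (ψ h).trans (ψ g) := by
    intro g h
    ext q
    show e (act (g * h) (e.symm q)) = e (act g (e.symm (e (act h (e.symm q)))))
    rw [e.symm_apply_apply]
    congr 1
    rw [act_apply, act_apply, act_apply]
    simp [mul_assoc]
  have ψ_one : ψ 1 = OrderIso.refl ℚ := by
    ext q
    show e (act 1 (e.symm q)) = q
    rw [act_apply]
    simp
  -- the homomorphism
  refine ⟨{ toFun := fun g => LOEmbedAux.extPerm (ψ g)
            map_one' := ?_
            map_mul' := ?_ }, ?_, ?_⟩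
  · ext x
    show LOEmbedAux.ext (ψ 1) x = x
    rw [ψ_one, LOEmbedAux.ext_refl]
  · intro g h
    ext x
    show LOEmbedAux.ext (ψ (g * h)) x = LOEmbedAux.ext (ψ g) (LOEmbedAux.ext (ψ h) x)
    rw [LOEmbedAux.ext_comp, ψ_mul]
  · rw [injective_iff_map_eq_one]
    intro g hg
    have hext : ∀ x : ℝ, LOEmbedAux.ext (ψ g) x = x := fun x => by have := Equiv.ext_iff.mp hg x; exact this
    have hrat : ∀ q : ℚ, ψ g q = q := by
      intro q
      have := hext (q : ℝ)
      rw [LOEmbedAux.ext_rat] at this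
      exact_mod_cast this
    have hact : act g (toLex (1, 0)) = toLex (1, 0) := by
      have := hrat (e (toLex (1, 0)))
      rw [ψ_apply, e.symm_apply_apply] at this
      exact e.injective this
    rw [act_apply] at hact
    have : (ofLex (toLex (g * (ofLex (toLex ((1 : G), (0 : ℚ)))).1,
        (ofLex (toLex ((1 : G), (0 : ℚ)))).2))).1 = (ofLex (toLex ((1 : G), (0 : ℚ)))).1 := by
      rw [hact]
    simpa using this
  · intro g
    exact LOEmbedAux.ext_strictMono (ψ g)
end

section
/- Let F be a foliation of the plane by properly embedded lines, and let τ be a curve (continuous injective path) in the plane transverse to F. Then τ intersects each leaf of F at most once. (Model statement: if every leaf l of F separates the plane into two open half-planes and τ crosses from one side to the other at each intersection point with consistent transverse orientation, then τ ∩ l contains at most one point.) -/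
/-!
Suppose `τ` meets `l` at times `t₁ < t₂`, and let `c ∈ (t₁, t₂]` be the first time after `t₁` at
which `τ` meets `l` again. On the connected interval `(t₁, c)` the path stays in `U ∪ V`, a union of
disjoint open sets, so it stays in one of them. But transversality puts it in `V` just after `t₁`
and in `U` just before `c`.
-/

open Set Filter Topology

theorem IsClosed.exists_first_mem_Ioc {K : Set ℝ} (hK : IsClosed K) {a b : ℝ} (hab : a < b)
    (hb : b ∈ K) (ha : ∀ᶠ s in 𝓝[>] a, s ∉ K) :
    ∃ c ∈ Ioc a b, c ∈ K ∧ ∀ s ∈ Ioo a c, s ∉ K := by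
  obtain ⟨a', ha', hfree⟩ := mem_nhdsGT_iff_exists_Ioo_subset.1 ha
  have ha'b : a' ≤ b := not_lt.1 fun h => hfree ⟨hab, h⟩ hb
  set S := K ∩ Icc a' b
  have hSbdd : BddBelow S := ⟨a', fun s hs => hs.2.1⟩
  obtain ⟨hcK, ha'c, hcb⟩ := (hK.inter isClosed_Icc).csInf_mem ⟨b, hb, ha'b, le_rfl⟩ hSbdd
  refine ⟨sInf S, ⟨ha'.trans_le ha'c, hcb⟩, hcK, fun s hs hsK => ?_⟩
  rcases lt_or_ge s a' with h | h
  · exact hfree ⟨hs.1, h⟩ hsK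
  · exact hs.2.not_ge (csInf_le hSbdd ⟨hsK, h, hs.2.le.trans hcb⟩)

section Crossing

variable {X : Type*} [TopologicalSpace X]

def CrossesFromTo (f : ℝ → X) (U V : Set X) : Prop :=
  ∀ t, f t ∉ U ∪ V → (∀ᶠ s in 𝓝[<] t, f s ∈ U) ∧ ∀ᶠ s in 𝓝[>] t, f s ∈ V

variable {f : ℝ → X} {U V : Set X}

theorem CrossesFromTo.le_of_notMem (hf : CrossesFromTo f U V) (hfc : Continuous f)
    (hU : IsOpen U) (hV : IsOpen V) (hUV : Disjoint U V) {a b : ℝ}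
    (ha : f a ∉ U ∪ V) (hb : f b ∉ U ∪ V) : b ≤ a := by
  by_contra! hab
  have hK : IsClosed (f ⁻¹' (U ∪ V)ᶜ) := (hU.union hV).isClosed_compl.preimage hfc
  obtain ⟨c, ⟨hac, -⟩, hc, hfree⟩ :=
    hK.exists_first_mem_Ioc hab hb ((hf a ha).2.mono fun s hs hs' => hs' (Or.inr hs))
  have hIoo : Ioo a c ⊆ f ⁻¹' U ∨ Ioo a c ⊆ f ⁻¹' V :=
    isPreconnected_Ioo.subset_or_subset (hU.preimage hfc) (hV.preimage hfc) (hUV.preimage f)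
      fun s hs => not_not.1 (hfree s hs)
  rcases hIoo with hsub | hsub
  · obtain ⟨s, hsV, hs⟩ := ((hf a ha).2.and (Ioo_mem_nhdsGT hac)).exists
    exact hUV.notMem_of_mem_left (hsub hs) hsV
  · obtain ⟨s, hsU, hs⟩ := ((hf c hc).1.and (Ioo_mem_nhdsLT hac)).exists
    exact hUV.notMem_of_mem_left hsU (hsub hs)

theorem CrossesFromTo.eq_of_notMem (hf : CrossesFromTo f U V) (hfc : Continuous f)
    (hU : IsOpen U) (hV : IsOpen V) (hUV : Disjoint U V) {a b : ℝ}
    (ha : f a ∉ U ∪ V) (hb : f b ∉ U ∪ V) : a = b :=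
  le_antisymm (hf.le_of_notMem hfc hU hV hUV hb ha) (hf.le_of_notMem hfc hU hV hUV ha hb)

end Crossing

theorem transversal_meets_leaf_at_most_once_general
    (l U V : Set (ℝ × ℝ)) (hU : IsOpen U) (hV : IsOpen V) (hdisj : Disjoint U V)
    (hcompl : U ∪ V = lᶜ)
    (τ : ℝ → ℝ × ℝ) (hcont : Continuous τ)
    (hcross : ∀ t : ℝ, τ t ∈ l → ∃ ε > 0,
      (∀ s, t - ε < s → s < t → τ s ∈ U) ∧ (∀ s, t < s → s < t + ε → τ s ∈ V)) :
    ∀ t₁ t₂ : ℝ, τ t₁ ∈ l → τ t₂ ∈ l → t₁ = t₂ := by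
  obtain rfl : l = (U ∪ V)ᶜ := by rw [hcompl, compl_compl]
  have hτ : CrossesFromTo τ U V := fun t ht => by
    obtain ⟨ε, hε, hbefore, hafter⟩ := hcross t ht
    exact ⟨mem_of_superset (Ioo_mem_nhdsLT (by linarith)) fun s hs => hbefore s hs.1 hs.2,
      mem_of_superset (Ioo_mem_nhdsGT (by linarith)) fun s hs => hafter s hs.1 hs.2⟩
  exact fun t₁ t₂ => hτ.eq_of_notMem hcont hU hV hdisj

theorem transversal_meets_leaf_at_most_once
    (l U V : Set (ℝ × ℝ)) (hU : IsOpen U) (hV : IsOpen V) (hdisj : Disjoint U V)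
    (hcompl : U ∪ V = lᶜ)
    (τ : ℝ → ℝ × ℝ) (hcont : Continuous τ) (hinj : Function.Injective τ)
    (hcross : ∀ t : ℝ, τ t ∈ l → ∃ ε > 0,
      (∀ s, t - ε < s → s < t → τ s ∈ U) ∧ (∀ s, t < s → s < t + ε → τ s ∈ V)) :
    ∀ t₁ t₂ : ℝ, τ t₁ ∈ l → τ t₂ ∈ l → t₁ = t₂ :=
  transversal_meets_leaf_at_most_once_general l U V hU hV hdisj hcompl τ hcont hcross
end
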